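/- (Theorem 3.7, convergence of the BK method with B of full column rank) Let A ∈ ℝ^{m×p} have all rows nonzero, let B ∈ ℝ^{q×n} have full column rank with QR decomposition B = QR (Q ∈ ℝ^{q×n} with orthonormal columns, R ∈ ℝ^{n×n} invertible upper triangular), let C ∈ ℝ^{m×n}, and suppose AXB = C is consistent. Set Ĉ := C R⁻¹ and let 0 < α < 2. Define the cyclic iterates X^{k+1} = X^k + (α/‖A_{i_k,:}‖²) A_{i_k,:}ᵀ (Ĉ_{i_k,:} − A_{i_k,:} X^k Q) Qᵀ with i_k = (k mod m) + 1 from X⁰ ∈ ℝ^{p×q}. Then (X^k) converges to a solution of AXB = C; moreover, if every column of X⁰ lies in the column space of Aᵀ and every column of (X⁰)ᵀ lies in the column space of B, then (X^k) converges to the minimum-norm solution A⁺ Ĉ Qᵀ = A⁺ C B⁺. -/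

import Mathlib

open Matrix Finset Filter Topology

/-- Squared Euclidean norm of a vector. -/
noncomputable def vnormSq {k : ℕ} (v : Fin k → ℝ) : ℝ := ∑ j, (v j) ^ 2

/-- Squared Frobenius norm of a matrix. -/
noncomputable def frobSq {a b : ℕ} (X : Matrix (Fin a) (Fin b) ℝ) : ℝ := ∑ i, ∑ j, (X i j) ^ 2

/-- Frobenius norm of a matrix. -/
noncomputable def frobNorm {a b : ℕ} (X : Matrix (Fin a) (Fin b) ℝ) : ℝ := Real.sqrt (frobSq X)

/-- Frobenius (trace) inner product `⟨X, Y⟩_F = tr(Xᵀ Y)`. -/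
noncomputable def frobInner {a b : ℕ} (X Y : Matrix (Fin a) (Fin b) ℝ) : ℝ := Matrix.trace (Xᵀ * Y)

/-- Spectral (operator 2-) norm of a matrix. -/
noncomputable def specNorm {a b : ℕ} (B : Matrix (Fin a) (Fin b) ℝ) : ℝ :=
  ‖LinearMap.toContinuousLinearMap (Matrix.toEuclideanLin B)‖

/-- `Mp` is the Moore–Penrose pseudoinverse of `M`: the four Penrose conditions. -/
def IsMPInv {a b : ℕ} (M : Matrix (Fin a) (Fin b) ℝ) (Mp : Matrix (Fin b) (Fin a) ℝ) : Prop :=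
  M * Mp * M = M ∧ Mp * M * Mp = Mp ∧ (M * Mp)ᵀ = M * Mp ∧ (Mp * M)ᵀ = Mp * M

lemma frobSq_eq_trace {a b : ℕ} (M : Matrix (Fin a) (Fin b) ℝ) :
    frobSq M = Matrix.trace (M * Mᵀ) := by
  simp [frobSq, Matrix.trace, Matrix.mul_apply, Matrix.diag, sq]

lemma frobSq_nonneg {a b : ℕ} (M : Matrix (Fin a) (Fin b) ℝ) : 0 ≤ frobSq M := by
  apply Finset.sum_nonneg; intro i _; apply Finset.sum_nonneg; intro j _; positivity

lemma mpinv_unique {a b : ℕ} (M : Matrix (Fin a) (Fin b) ℝ)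
    (P1 P2 : Matrix (Fin b) (Fin a) ℝ) (h1 : IsMPInv M P1) (h2 : IsMPInv M P2) : P1 = P2 := by
  obtain ⟨h1a, h1b, h1c, h1d⟩ := h1
  obtain ⟨h2a, h2b, h2c, h2d⟩ := h2
  have e1 : M * P1 = M * P2 := by
    calc M * P1 = (M * P1)ᵀ := h1c.symm
    _ = ((M * P2 * M) * P1)ᵀ := by rw [h2a]
    _ = (M * P1)ᵀ * (M * P2)ᵀ := by rw [Matrix.transpose_mul (M * P2 * M) P1, Matrix.transpose_mul (M * P2) M]; simp [Matrix.mul_assoc]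
    _ = (M * P1) * (M * P2) := by rw [h1c, h2c]
    _ = (M * P1 * M) * P2 := by simp [Matrix.mul_assoc]
    _ = M * P2 := by rw [h1a]
  have e2 : P1 * M = P2 * M := by
    calc P1 * M = (P1 * M)ᵀ := h1d.symm
    _ = (P1 * (M * P2 * M))ᵀ := by rw [h2a]
    _ = (P2 * M)ᵀ * (P1 * M)ᵀ := by rw [show P1 * (M * P2 * M) = (P1 * M) * (P2 * M) by simp [Matrix.mul_assoc], Matrix.transpose_mul]
    _ = (P2 * M) * (P1 * M) := by rw [h1d, h2d]
    _ = P2 * (M * P1 * M) := by simp [Matrix.mul_assoc]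
    _ = P2 * M := by rw [h1a]
  calc P1 = P1 * M * P1 := h1b.symm
  _ = P1 * M * P2 := by rw [show P1 * M * P1 = P1 * (M * P1) by simp [Matrix.mul_assoc], e1]; simp [Matrix.mul_assoc]
  _ = P2 * M * P2 := by rw [e2]
  _ = P2 := h2b

lemma frobNorm_mono {a b : ℕ} {M N : Matrix (Fin a) (Fin b) ℝ} (h : frobSq M ≤ frobSq N) :
    frobNorm M ≤ frobNorm N := Real.sqrt_le_sqrt h

lemma min_norm {mm pp qq nn : ℕ} (A : Matrix (Fin mm) (Fin pp) ℝ) (B : Matrix (Fin qq) (Fin nn) ℝ)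
    (C : Matrix (Fin mm) (Fin nn) ℝ) (Ap : Matrix (Fin pp) (Fin mm) ℝ)
    (Bp : Matrix (Fin nn) (Fin qq) ℝ) (hAp : IsMPInv A Ap) (hBp : IsMPInv B Bp)
    (Y : Matrix (Fin pp) (Fin qq) ℝ) (hY : A * Y * B = C) :
    frobNorm (Ap * C * Bp) ≤ frobNorm Y := by
  set P := Ap * A with hP
  set P' := B * Bp with hP'
  have hPt : Pᵀ = P := hAp.2.2.2
  have hP't : P'ᵀ = P' := hBp.2.2.1
  have hP2 : P * P = P := by
    calc P * P = (Ap * A * Ap) * A := by simp [hP, Matrix.mul_assoc]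
    _ = Ap * A := by rw [hAp.2.1]
  have hP'2 : P' * P' = P' := by
    calc P' * P' = (B * Bp * B) * Bp := by simp [hP', Matrix.mul_assoc]
    _ = B * Bp := by rw [hBp.1]
  set Z := Ap * C * Bp with hZdef
  have hZ : Z = P * Y * P' := by rw [hZdef, ← hY]; simp [hP, hP', Matrix.mul_assoc]
  have hZt : Zᵀ = P' * (Yᵀ * P) := by
    rw [hZ]; simp [Matrix.transpose_mul, hPt, hP't, Matrix.mul_assoc]
  have cross : Matrix.trace (Z * Zᵀ) = Matrix.trace (Z * Yᵀ) := by
    calc Matrix.trace (Z * Zᵀ) = Matrix.trace ((P * Y * (P' * P') * Yᵀ) * P) := by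
          rw [hZt, hZ]; simp [Matrix.mul_assoc]
    _ = Matrix.trace (P * (P * Y * (P' * P') * Yᵀ)) := Matrix.trace_mul_comm _ _
    _ = Matrix.trace ((P * P) * Y * P' * Yᵀ) := by rw [hP'2]; simp [Matrix.mul_assoc]
    _ = Matrix.trace (Z * Yᵀ) := by rw [hP2, hZ]
  have hc1 : Matrix.trace (Z * (Y - Z)ᵀ) = 0 := by
    rw [Matrix.transpose_sub, Matrix.mul_sub, Matrix.trace_sub, cross, sub_self]
  have hc2 : Matrix.trace ((Y - Z) * Zᵀ) = 0 := by
    have : (Y - Z) * Zᵀ = (Z * (Y - Z)ᵀ)ᵀ := by simp [Matrix.transpose_mul]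
    rw [this, Matrix.trace_transpose, hc1]
  have expand : frobSq Y = frobSq Z + frobSq (Y - Z) := by
    have hy : Y = Z + (Y - Z) := by abel
    calc frobSq Y = Matrix.trace (Y * Yᵀ) := frobSq_eq_trace Y
    _ = Matrix.trace (Z * Zᵀ) + Matrix.trace (Z * (Y - Z)ᵀ) + Matrix.trace ((Y - Z) * Zᵀ)
        + Matrix.trace ((Y - Z) * (Y - Z)ᵀ) := by
          conv_lhs => rw [hy]
          simp only [Matrix.transpose_add, Matrix.add_mul, Matrix.mul_add, Matrix.trace_add]
          abel
    _ = frobSq Z + frobSq (Y - Z) := by rw [hc1, hc2, ← frobSq_eq_trace, ← frobSq_eq_trace]; ring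
  apply frobNorm_mono
  rw [expand]
  have := frobSq_nonneg (Y - Z)
  linarith


noncomputable section
variable {m p : ℕ}

/-- Row `i` of `A` as a Euclidean vector. -/
def arow (A : Matrix (Fin m) (Fin p) ℝ) (i : Fin m) : EuclideanSpace ℝ (Fin p) :=
  WithLp.toLp 2 (fun l => A i l)

lemma inner_arow (A : Matrix (Fin m) (Fin p) ℝ) (i : Fin m) (v : EuclideanSpace ℝ (Fin p)) :
    (inner ℝ (arow A i) v : ℝ) = (A *ᵥ v) i := by
  simp [arow, PiLp.inner_apply, RCLike.inner_apply, Matrix.mulVec, dotProduct, mul_comm]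

/-- One Kaczmarz step as a linear map (acting on the error). -/
def Plin (A : Matrix (Fin m) (Fin p) ℝ) (α : ℝ) (i : Fin m) :
    EuclideanSpace ℝ (Fin p) →ₗ[ℝ] EuclideanSpace ℝ (Fin p) where
  toFun v := v - ((α / ‖arow A i‖ ^ 2) * inner ℝ (arow A i) v) • arow A i
  map_add' x y := by
    simp only [inner_add_right, mul_add, add_smul]
    abel
  map_smul' c v := by
    simp only [RingHom.id_apply, real_inner_smul_right, smul_sub, smul_smul]
    ring_nf

variable {A : Matrix (Fin m) (Fin p) ℝ} {α : ℝ}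

lemma Plin_apply (A : Matrix (Fin m) (Fin p) ℝ) (α : ℝ) (i : Fin m)
    (v : EuclideanSpace ℝ (Fin p)) :
    Plin A α i v = v - ((α / ‖arow A i‖ ^ 2) * inner ℝ (arow A i) v) • arow A i := rfl

lemma arow_norm_pos (hrows : ∀ i, A i ≠ 0) (i : Fin m) : 0 < ‖arow A i‖ := by
  rw [norm_pos_iff]
  exact fun h => hrows i (by simpa [arow] using congrArg WithLp.ofLp h)

lemma Plin_norm_sq (hrows : ∀ i, A i ≠ 0) (i : Fin m) (v : EuclideanSpace ℝ (Fin p)) :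
    ‖Plin A α i v‖ ^ 2
      = ‖v‖ ^ 2 - (α * (2 - α) / ‖arow A i‖ ^ 2) * (inner ℝ (arow A i) v : ℝ) ^ 2 := by
  have hs : (‖arow A i‖ : ℝ) ^ 2 ≠ 0 :=
    pow_ne_zero _ (ne_of_gt (arow_norm_pos hrows i))
  rw [Plin_apply]
  rw [norm_sub_sq_real, real_inner_smul_right, norm_smul]
  rw [real_inner_comm v (arow A i)]
  rw [mul_pow, Real.norm_eq_abs, sq_abs]
  field_simp
  ring

lemma Plin_norm_le (hrows : ∀ i, A i ≠ 0) (hα1 : 0 < α) (hα2 : α < 2) (i : Fin m)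
    (v : EuclideanSpace ℝ (Fin p)) : ‖Plin A α i v‖ ≤ ‖v‖ := by
  have h := Plin_norm_sq (α := α) hrows i v
  have hs : (0:ℝ) < ‖arow A i‖ ^ 2 := by
    have := arow_norm_pos (A := A) hrows i; positivity
  have hterm : 0 ≤ (α * (2 - α) / ‖arow A i‖ ^ 2) * (inner ℝ (arow A i) v : ℝ) ^ 2 := by
    have h1 : 0 ≤ α * (2 - α) := by nlinarith
    positivity
  nlinarith [norm_nonneg (Plin A α i v), norm_nonneg v]

lemma Plin_eq_of_norm_eq (hrows : ∀ i, A i ≠ 0) (hα1 : 0 < α) (hα2 : α < 2) (i : Fin m)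
    (v : EuclideanSpace ℝ (Fin p)) (h : ‖Plin A α i v‖ = ‖v‖) :
    (inner ℝ (arow A i) v : ℝ) = 0 ∧ Plin A α i v = v := by
  have hsq := Plin_norm_sq (α := α) hrows i v
  rw [h] at hsq
  have hs : (0:ℝ) < ‖arow A i‖ ^ 2 := by
    have := arow_norm_pos (A := A) hrows i; positivity
  have h1 : (0:ℝ) < α * (2 - α) := by nlinarith
  have hz : (inner ℝ (arow A i) v : ℝ) = 0 := by
    have h2 : (α * (2 - α) / ‖arow A i‖ ^ 2) * (inner ℝ (arow A i) v : ℝ) ^ 2 = 0 := by linarith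
    have h3 : (0:ℝ) < α * (2 - α) / ‖arow A i‖ ^ 2 := by positivity
    have h4 : (inner ℝ (arow A i) v : ℝ) ^ 2 = 0 :=
      (mul_eq_zero.mp h2).resolve_left (ne_of_gt h3)
    exact pow_eq_zero_iff two_ne_zero |>.mp h4
  refine ⟨hz, ?_⟩
  rw [Plin_apply, hz]
  simp

lemma Plin_fix_of_ker (α : ℝ) (i : Fin m) (v : EuclideanSpace ℝ (Fin p))
    (h : A *ᵥ v = 0) : Plin A α i v = v := by
  have : (inner ℝ (arow A i) v : ℝ) = 0 := by rw [inner_arow, h]; rfl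
  rw [Plin_apply, this]; simp

/-- `S`: the orthogonal complement of the kernel of `A`. -/
def Ssub (A : Matrix (Fin m) (Fin p) ℝ) : Submodule ℝ (EuclideanSpace ℝ (Fin p)) :=
  (LinearMap.ker (Matrix.toEuclideanLin A))ᗮ

lemma mem_ker_iff (v : EuclideanSpace ℝ (Fin p)) :
    v ∈ LinearMap.ker (Matrix.toEuclideanLin A) ↔ A *ᵥ v = 0 := by
  rw [LinearMap.mem_ker, Matrix.toEuclideanLin_apply, WithLp.toLp_eq_zero]

lemma arow_mem_Ssub (i : Fin m) : arow A i ∈ Ssub A := by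
  rw [Ssub, Submodule.mem_orthogonal]
  intro u hu
  rw [real_inner_comm, inner_arow, (mem_ker_iff u).1 hu]
  rfl

lemma Plin_mem_Ssub (α : ℝ) (i : Fin m) (v : EuclideanSpace ℝ (Fin p)) (hv : v ∈ Ssub A) :
    Plin A α i v ∈ Ssub A := by
  rw [Plin_apply]
  exact Submodule.sub_mem _ hv (Submodule.smul_mem _ _ (arow_mem_Ssub i))

/-- Composition of the first `k` Kaczmarz steps (cyclically). -/
def Fmap (A : Matrix (Fin m) (Fin p) ℝ) (α : ℝ) (hm : 0 < m) :
    ℕ → (EuclideanSpace ℝ (Fin p) →ₗ[ℝ] EuclideanSpace ℝ (Fin p))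
  | 0 => LinearMap.id
  | (k+1) => (Plin A α ⟨k % m, Nat.mod_lt k hm⟩).comp (Fmap A α hm k)

variable (hm : 0 < m)

lemma Fmap_succ (k : ℕ) (v : EuclideanSpace ℝ (Fin p)) :
    Fmap A α hm (k+1) v = Plin A α ⟨k % m, Nat.mod_lt k hm⟩ (Fmap A α hm k v) := rfl

lemma Fmap_norm_le (hrows : ∀ i, A i ≠ 0) (hα1 : 0 < α) (hα2 : α < 2) (k : ℕ)
    (v : EuclideanSpace ℝ (Fin p)) : ‖Fmap A α hm k v‖ ≤ ‖v‖ := by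
  induction k with
  | zero => simp [Fmap]
  | succ k ih => exact le_trans (Plin_norm_le hrows hα1 hα2 _ _) ih

lemma Fmap_fix_of_ker (k : ℕ) (v : EuclideanSpace ℝ (Fin p)) (h : A *ᵥ v = 0) :
    Fmap A α hm k v = v := by
  induction k with
  | zero => rfl
  | succ k ih => rw [Fmap_succ, ih, Plin_fix_of_ker _ _ _ h]

lemma Fmap_mem_Ssub (k : ℕ) (v : EuclideanSpace ℝ (Fin p)) (hv : v ∈ Ssub A) :
    Fmap A α hm k v ∈ Ssub A := by
  induction k with
  | zero => exact hv
  | succ k ih => rw [Fmap_succ]; exact Plin_mem_Ssub _ _ _ ih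

lemma Fmap_cascade (hrows : ∀ i, A i ≠ 0) (hα1 : 0 < α) (hα2 : α < 2) (k : ℕ)
    (v : EuclideanSpace ℝ (Fin p)) (h : ‖Fmap A α hm k v‖ = ‖v‖) :
    Fmap A α hm k v = v ∧ ∀ t, t < k → (inner ℝ (arow A ⟨t % m, Nat.mod_lt t hm⟩) v : ℝ) = 0 := by
  induction k with
  | zero => exact ⟨rfl, fun t ht => absurd ht (Nat.not_lt_zero t)⟩
  | succ k ih =>
    have h1 : ‖Fmap A α hm k v‖ = ‖v‖ := by
      refine le_antisymm (Fmap_norm_le hm hrows hα1 hα2 k v) ?_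
      calc ‖v‖ = ‖Fmap A α hm (k+1) v‖ := h.symm
      _ ≤ ‖Fmap A α hm k v‖ := by rw [Fmap_succ]; exact Plin_norm_le hrows hα1 hα2 _ _
    obtain ⟨hfix, hzero⟩ := ih h1
    have h2 : ‖Plin A α ⟨k % m, Nat.mod_lt k hm⟩ v‖ = ‖v‖ := by
      conv_lhs => rw [← hfix]
      exact h
    obtain ⟨hz, hfx⟩ := Plin_eq_of_norm_eq hrows hα1 hα2 _ v h2
    constructor
    · rw [Fmap_succ, hfix, hfx]
    · intro t ht
      rcases Nat.lt_succ_iff_lt_or_eq.1 ht with h' | h'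
      · exact hzero t h'
      · subst h'; exact hz

lemma Fmap_cycle (s t : ℕ) (v : EuclideanSpace ℝ (Fin p)) :
    Fmap A α hm (s * m + t) v = Fmap A α hm t (Fmap A α hm (s * m) v) := by
  induction t with
  | zero => rfl
  | succ t ih =>
    have hmod : (s * m + t) % m = t % m := by
      rw [Nat.add_comm, Nat.add_mul_mod_self_right]
    have : (⟨(s * m + t) % m, Nat.mod_lt _ hm⟩ : Fin m) = ⟨t % m, Nat.mod_lt t hm⟩ := by
      simp [hmod]
    rw [show s * m + (t+1) = (s * m + t) + 1 from rfl, Fmap_succ, this, ih, ← Fmap_succ]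

lemma Fmap_sweep_pow (ρ : ℝ) (hρ0 : 0 ≤ ρ)
    (hρ : ∀ v ∈ Ssub A, ‖Fmap A α hm m v‖ ≤ ρ * ‖v‖) (s : ℕ) :
    ∀ v ∈ Ssub A, ‖Fmap A α hm (s * m) v‖ ≤ ρ ^ s * ‖v‖ := by
  induction s with
  | zero => intro v _; simp [Fmap]
  | succ s ih =>
    intro v hv
    have h1 : Fmap A α hm ((s+1) * m) v = Fmap A α hm m (Fmap A α hm (s * m) v) := by
      rw [show (s+1) * m = s * m + m by ring, Fmap_cycle]
    rw [h1]
    calc ‖Fmap A α hm m (Fmap A α hm (s * m) v)‖ ≤ ρ * ‖Fmap A α hm (s * m) v‖ :=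
          hρ _ (Fmap_mem_Ssub hm _ _ hv)
    _ ≤ ρ * (ρ ^ s * ‖v‖) := by
        have := ih v hv
        nlinarith [norm_nonneg (Fmap A α hm (s * m) v)]
    _ = ρ ^ (s+1) * ‖v‖ := by ring

lemma Fmap_geom (hrows : ∀ i, A i ≠ 0) (hα1 : 0 < α) (hα2 : α < 2) (ρ : ℝ) (hρ0 : 0 ≤ ρ)
    (hρ : ∀ v ∈ Ssub A, ‖Fmap A α hm m v‖ ≤ ρ * ‖v‖) (k : ℕ) :
    ∀ v ∈ Ssub A, ‖Fmap A α hm k v‖ ≤ ρ ^ (k / m) * ‖v‖ := by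
  intro v hv
  have hk : k = (k / m) * m + k % m := by
    rw [Nat.add_comm, Nat.mul_comm, Nat.mod_add_div]
  calc ‖Fmap A α hm k v‖ = ‖Fmap A α hm (k % m) (Fmap A α hm ((k / m) * m) v)‖ := by
        rw [← Fmap_cycle, ← hk]
  _ ≤ ‖Fmap A α hm ((k / m) * m) v‖ := Fmap_norm_le hm hrows hα1 hα2 _ _
  _ ≤ ρ ^ (k / m) * ‖v‖ := Fmap_sweep_pow hm ρ hρ0 hρ (k / m) v hv

lemma exists_rho (hrows : ∀ i, A i ≠ 0) (hα1 : 0 < α) (hα2 : α < 2) :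
    ∃ ρ : ℝ, 0 ≤ ρ ∧ ρ < 1 ∧ ∀ v ∈ Ssub A, ‖Fmap A α hm m v‖ ≤ ρ * ‖v‖ := by
  by_cases hSbot : Ssub A = ⊥
  · refine ⟨0, le_refl _, one_pos, fun v hv => ?_⟩
    rw [hSbot, Submodule.mem_bot] at hv
    subst hv
    simp only [map_zero, norm_zero, zero_mul, le_refl]
  · obtain ⟨w, hwS, hw0⟩ := Submodule.exists_mem_ne_zero_of_ne_bot hSbot
    set K : Set (EuclideanSpace ℝ (Fin p)) := {v | v ∈ Ssub A ∧ ‖v‖ = 1} with hK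
    have hKne : K.Nonempty := by
      refine ⟨(‖w‖⁻¹ : ℝ) • w, Submodule.smul_mem _ _ hwS, ?_⟩
      rw [norm_smul, norm_inv, norm_norm, inv_mul_cancel₀ (norm_ne_zero_iff.2 hw0)]
    have hKclosed : IsClosed K := by
      have h1 : IsClosed ((Ssub A : Set (EuclideanSpace ℝ (Fin p)))) :=
        Submodule.closed_of_finiteDimensional _
      have h2 : IsClosed {v : EuclideanSpace ℝ (Fin p) | ‖v‖ = 1} :=
        isClosed_eq continuous_norm continuous_const
      exact h1.inter h2
    have hKbdd : Bornology.IsBounded K := by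
      apply Bornology.IsBounded.subset (Metric.isBounded_closedBall (x := (0 : EuclideanSpace ℝ (Fin p))) (r := 1))
      intro v hv
      rw [Metric.mem_closedBall, dist_zero_right, hv.2]
    have hKcompact : IsCompact K := Metric.isCompact_of_isClosed_isBounded hKclosed hKbdd
    have hcont : Continuous (fun v : EuclideanSpace ℝ (Fin p) => ‖Fmap A α hm m v‖) :=
      ((Fmap A α hm m).continuous_of_finiteDimensional).norm
    obtain ⟨v₀, hv₀K, hmax⟩ := hKcompact.exists_isMaxOn hKne hcont.continuousOn
    set ρ := ‖Fmap A α hm m v₀‖ with hρdef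
    have hρ0 : 0 ≤ ρ := norm_nonneg _
    have hρle : ρ ≤ 1 := by
      have := Fmap_norm_le hm hrows hα1 hα2 m v₀
      rw [hv₀K.2] at this
      exact this
    have hρlt : ρ < 1 := by
      rcases lt_or_eq_of_le hρle with h | h
      · exact h
      · exfalso
        have heq : ‖Fmap A α hm m v₀‖ = ‖v₀‖ := by rw [← hρdef, h, hv₀K.2]
        obtain ⟨_, hzero⟩ := Fmap_cascade hm hrows hα1 hα2 m v₀ heq
        have hker : A *ᵥ v₀ = 0 := by
          funext i
          have := hzero i.val i.isLt
          rw [inner_arow] at this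
          have hfin : (⟨i.val % m, Nat.mod_lt i.val hm⟩ : Fin m) = i := by
            simp [Nat.mod_eq_of_lt i.isLt]
          rw [hfin] at this
          exact this
        have : (inner ℝ v₀ v₀ : ℝ) = 0 := by
          have h1 := hv₀K.1
          rw [Ssub, Submodule.mem_orthogonal] at h1
          exact h1 v₀ ((mem_ker_iff v₀).2 hker)
        have : v₀ = 0 := by rwa [inner_self_eq_zero] at this
        have h2 := hv₀K.2
        rw [this, norm_zero] at h2
        exact one_ne_zero h2.symm
    refine ⟨ρ, hρ0, hρlt, fun v hv => ?_⟩
    by_cases hv0 : v = 0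
    · subst hv0
      simp only [map_zero, norm_zero, mul_zero, le_refl]
    · have hnv : ‖v‖ ≠ 0 := norm_ne_zero_iff.2 hv0
      set u := (‖v‖⁻¹ : ℝ) • v with hu
      have huK : u ∈ K := by
        refine ⟨Submodule.smul_mem _ _ hv, ?_⟩
        rw [hu, norm_smul, norm_inv, norm_norm, inv_mul_cancel₀ hnv]
      have hub : ‖Fmap A α hm m u‖ ≤ ρ := hmax huK
      have hvu : v = (‖v‖ : ℝ) • u := by
        rw [hu, smul_smul, mul_inv_cancel₀ hnv, one_smul]
      calc ‖Fmap A α hm m v‖ = ‖Fmap A α hm m (‖v‖ • u)‖ := by rw [← hvu]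
      _ = ‖v‖ * ‖Fmap A α hm m u‖ := by
            rw [_root_.map_smul, norm_smul, Real.norm_eq_abs, abs_of_nonneg (norm_nonneg v)]
      _ ≤ ‖v‖ * ρ := by nlinarith [norm_nonneg v]
      _ = ρ * ‖v‖ := by ring

end

section Master
open Matrix Finset Filter Topology

variable {m p q n : ℕ}

lemma vnormSq_eq_norm_sq (x : EuclideanSpace ℝ (Fin p)) : vnormSq (fun i => x i) = ‖x‖ ^ 2 := by
  rw [EuclideanSpace.norm_eq, Real.sq_sqrt (by positivity)]
  simp [vnormSq, sq_abs]

lemma vecMulVec_mul_Q {Q : Matrix (Fin q) (Fin n) ℝ} (hQ : Qᵀ * Q = 1)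
    (x : Fin p → ℝ) (r : Fin n → ℝ) :
    vecMulVec x (Q *ᵥ r) * Q = vecMulVec x r := by
  have hQe : ∀ j l, ∑ t, Q t j * Q t l = (1 : Matrix (Fin n) (Fin n) ℝ) j l := by
    intro j l; rw [← hQ]; simp [Matrix.mul_apply, Matrix.transpose_apply]
  funext i j
  simp only [Matrix.mul_apply, vecMulVec_apply, Matrix.mulVec, dotProduct]
  calc ∑ t, (x i * ∑ l, Q t l * r l) * Q t j
      = ∑ t, ∑ l, x i * (Q t j * Q t l) * r l := by
        apply Finset.sum_congr rfl; intro t _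
        rw [Finset.mul_sum, Finset.sum_mul]
        exact Finset.sum_congr rfl (fun l _ => by ring)
  _ = ∑ l, ∑ t, x i * (Q t j * Q t l) * r l := Finset.sum_comm
  _ = ∑ l, x i * (∑ t, Q t j * Q t l) * r l := by
        apply Finset.sum_congr rfl; intro l _
        rw [Finset.mul_sum, Finset.sum_mul]
  _ = x i * r j := by simp [hQe, Matrix.one_apply]

lemma vecMulVec_mul_Qt {Q : Matrix (Fin q) (Fin n) ℝ}
    (x : Fin p → ℝ) (r : Fin n → ℝ) :
    vecMulVec x r * Qᵀ = vecMulVec x (Q *ᵥ r) := by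
  funext i j
  simp only [Matrix.mul_apply, vecMulVec_apply, Matrix.transpose_apply, Matrix.mulVec, dotProduct,
    Finset.mul_sum]
  congr 1; funext t; ring

lemma master (hm : 0 < m)
    (A : Matrix (Fin m) (Fin p) ℝ) (hrows : ∀ i, A i ≠ 0)
    (Q : Matrix (Fin q) (Fin n) ℝ) (hQ : Qᵀ * Q = 1)
    (Ch : Matrix (Fin m) (Fin n) ℝ)
    (α : ℝ) (hα1 : 0 < α) (hα2 : α < 2)
    (X : ℕ → Matrix (Fin p) (Fin q) ℝ)
    (hX : ∀ k : ℕ, X (k + 1) = X k + (α / vnormSq (A ⟨k % m, Nat.mod_lt k hm⟩)) •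
      vecMulVec (A ⟨k % m, Nat.mod_lt k hm⟩)
        (Q *ᵥ ((Ch - A * X k * Q) ⟨k % m, Nat.mod_lt k hm⟩)))
    (Ystar : Matrix (Fin p) (Fin n) ℝ) (hYs : A * Ystar = Ch) :
    ∃ W : Matrix (Fin p) (Fin n) ℝ, A * W = 0 ∧
      Tendsto (fun k => frobNorm (X k - ((Ystar + W) * Qᵀ + X 0 * (1 - Q * Qᵀ)))) atTop (nhds 0) ∧
      ((∀ j : Fin n, (show EuclideanSpace ℝ (Fin p) from WithLp.toLp 2 (fun i => (X 0 * Q - Ystar) i j)) ∈ Ssub A)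
        → W = 0) := by
  classical
  set e : Fin n → ℕ → EuclideanSpace ℝ (Fin p) :=
    fun j k => WithLp.toLp 2 (fun i => (X k * Q - Ystar) i j) with he
  have step : ∀ (j : Fin n) (k : ℕ),
      e j (k + 1) = Plin A α ⟨k % m, Nat.mod_lt k hm⟩ (e j k) := by
    intro j k
    have hmul : X (k + 1) * Q = X k * Q + (α / vnormSq (A ⟨k % m, Nat.mod_lt k hm⟩)) •
        vecMulVec (A ⟨k % m, Nat.mod_lt k hm⟩) ((Ch - A * X k * Q) ⟨k % m, Nat.mod_lt k hm⟩) := by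
      rw [hX k, Matrix.add_mul, Matrix.smul_mul, vecMulVec_mul_Q hQ]
    have hinner : (inner ℝ (arow A ⟨k % m, Nat.mod_lt k hm⟩) (e j k) : ℝ)
        = -(Ch - A * X k * Q) ⟨k % m, Nat.mod_lt k hm⟩ j := by
      rw [inner_arow]
      have h1 : (A *ᵥ (e j k)) ⟨k % m, Nat.mod_lt k hm⟩
          = (A * (X k * Q - Ystar)) ⟨k % m, Nat.mod_lt k hm⟩ j := by
        simp [he, Matrix.mulVec, Matrix.mul_apply, dotProduct]
      rw [h1, Matrix.mul_sub, hYs, ← Matrix.mul_assoc]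
      simp [Matrix.sub_apply]
    have hnorm : vnormSq (A ⟨k % m, Nat.mod_lt k hm⟩)
        = ‖arow A ⟨k % m, Nat.mod_lt k hm⟩‖ ^ 2 :=
      vnormSq_eq_norm_sq (arow A ⟨k % m, Nat.mod_lt k hm⟩)
    ext i
    rw [Plin_apply]
    show (X (k+1) * Q - Ystar) i j
      = (e j k) i - ((α / ‖arow A ⟨k % m, Nat.mod_lt k hm⟩‖ ^ 2)
          * inner ℝ (arow A ⟨k % m, Nat.mod_lt k hm⟩) (e j k)) • arow A ⟨k % m, Nat.mod_lt k hm⟩ i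
    rw [hinner, ← hnorm]
    simp only [he, Matrix.sub_apply, smul_eq_mul]
    rw [hmul]
    simp only [Matrix.add_apply, Matrix.smul_apply, vecMulVec_apply, smul_eq_mul, arow,
      Matrix.sub_apply]
    ring
  have hek : ∀ (j : Fin n) (k : ℕ), e j k = Fmap A α hm k (e j 0) := by
    intro j k
    induction k with
    | zero => rfl
    | succ k ih => rw [step j k, ih]; exact (Fmap_succ hm k (e j 0)).symm
  set kerA := LinearMap.ker (Matrix.toEuclideanLin A) with hkerA
  set w : Fin n → EuclideanSpace ℝ (Fin p) :=
    fun j => (kerA.orthogonalProjectionOnto (e j 0) : EuclideanSpace ℝ (Fin p)) with hw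
  set u : Fin n → EuclideanSpace ℝ (Fin p) := fun j => e j 0 - w j with hu
  have humem : ∀ j, u j ∈ Ssub A := fun j =>
    Submodule.sub_starProjection_mem_orthogonal (K := kerA) (e j 0)
  have hwker : ∀ j, A *ᵥ w j = 0 := fun j => (mem_ker_iff (w j)).1 (SetLike.coe_mem _)
  have hdiff : ∀ (j : Fin n) (k : ℕ), e j k - w j = Fmap A α hm k (u j) := by
    intro j k
    rw [hek j k]
    have h0 : e j 0 = u j + w j := by
      show e j 0 = e j 0 - w j + w j
      rw [sub_add_cancel]
    rw [h0, map_add, Fmap_fix_of_ker hm k (w j) (hwker j)]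
    abel
  obtain ⟨ρ, hρ0, hρ1, hρ⟩ := exists_rho hm hrows hα1 hα2
  have hbound : ∀ (j : Fin n) (k : ℕ), ‖e j k - w j‖ ≤ ρ ^ (k / m) * ‖u j‖ := by
    intro j k
    rw [hdiff j k]
    exact Fmap_geom hm hrows hα1 hα2 ρ hρ0 hρ k (u j) (humem j)
  set W : Matrix (Fin p) (Fin n) ℝ := Matrix.of (fun i j => w j i) with hW
  have hAW : A * W = 0 := by
    funext i j
    have h1 : (A * W) i j = (A *ᵥ w j) i := by
      simp [hW, Matrix.mul_apply, Matrix.mulVec, dotProduct]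
    rw [h1, hwker j]
    rfl
  have hinv : ∀ k, X k * (1 - Q * Qᵀ) = X 0 * (1 - Q * Qᵀ) := by
    intro k
    induction k with
    | zero => rfl
    | succ k ih =>
      have hV : vecMulVec (A ⟨k % m, Nat.mod_lt k hm⟩)
          (Q *ᵥ ((Ch - A * X k * Q) ⟨k % m, Nat.mod_lt k hm⟩)) * (1 - Q * Qᵀ) = 0 := by
        rw [Matrix.mul_sub, Matrix.mul_one, ← Matrix.mul_assoc, vecMulVec_mul_Q hQ,
          vecMulVec_mul_Qt, sub_self]
      rw [hX k, Matrix.add_mul, Matrix.smul_mul, hV, smul_zero, add_zero, ih]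
  have hXL : ∀ k, X k - ((Ystar + W) * Qᵀ + X 0 * (1 - Q * Qᵀ))
      = (X k * Q - Ystar - W) * Qᵀ := by
    intro k
    have h1 : X k = X k * Q * Qᵀ + X k * (1 - Q * Qᵀ) := by
      rw [Matrix.mul_sub, Matrix.mul_one, Matrix.mul_assoc]
      abel
    conv_lhs => rw [h1, hinv k]
    rw [Matrix.add_mul Ystar W, Matrix.sub_mul, Matrix.sub_mul]
    abel
  have hfrobQ : ∀ E : Matrix (Fin p) (Fin n) ℝ, frobSq (E * Qᵀ) = frobSq E := by
    intro E
    rw [frobSq_eq_trace, frobSq_eq_trace, Matrix.transpose_mul, Matrix.transpose_transpose]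
    have h2 : E * Qᵀ * (Q * Eᵀ) = E * (Qᵀ * Q) * Eᵀ := by simp [Matrix.mul_assoc]
    rw [h2, hQ, Matrix.mul_one]
  have hcol : ∀ k, frobSq (X k * Q - Ystar - W) = ∑ j, ‖e j k - w j‖ ^ 2 := by
    intro k
    rw [frobSq, Finset.sum_comm]
    apply Finset.sum_congr rfl; intro j _
    have h3 : ‖e j k - w j‖ ^ 2 = ∑ i, ((e j k - w j) i) ^ 2 := by
      rw [EuclideanSpace.norm_eq, Real.sq_sqrt (by positivity)]
      simp [sq_abs]
    rw [h3]
    rfl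
  set Cst := Real.sqrt (∑ j, ‖u j‖ ^ 2) with hCst
  have hfin : ∀ k, frobNorm (X k - ((Ystar + W) * Qᵀ + X 0 * (1 - Q * Qᵀ)))
      ≤ ρ ^ (k / m) * Cst := by
    intro k
    rw [hXL k, frobNorm, hfrobQ, hcol k]
    calc Real.sqrt (∑ j, ‖e j k - w j‖ ^ 2) ≤ Real.sqrt (∑ j, (ρ ^ (k / m) * ‖u j‖) ^ 2) := by
          apply Real.sqrt_le_sqrt
          apply Finset.sum_le_sum
          intro j _
          have h1 := hbound j k
          nlinarith [norm_nonneg (e j k - w j), norm_nonneg (u j), pow_nonneg hρ0 (k / m)]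
    _ = ρ ^ (k / m) * Cst := by
          have h4 : ∑ j, (ρ ^ (k / m) * ‖u j‖) ^ 2 = (ρ ^ (k / m)) ^ 2 * ∑ j, ‖u j‖ ^ 2 := by
            rw [Finset.mul_sum]
            apply Finset.sum_congr rfl; intro j _; ring
          rw [h4, Real.sqrt_mul (sq_nonneg _), Real.sqrt_sq (pow_nonneg hρ0 _), hCst]
  have hdivt : Tendsto (fun k : ℕ => k / m) atTop atTop := by
    apply tendsto_atTop_atTop.2
    intro b
    exact ⟨b * m, fun k hk => (Nat.le_div_iff_mul_le hm).2 hk⟩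
  have hgeo : Tendsto (fun k : ℕ => ρ ^ (k / m) * Cst) atTop (nhds 0) := by
    have h1 : Tendsto (fun s : ℕ => ρ ^ s) atTop (nhds 0) :=
      tendsto_pow_atTop_nhds_zero_of_lt_one hρ0 hρ1
    have h2 := (h1.comp hdivt).mul_const Cst
    rw [zero_mul] at h2
    exact h2
  have htend : Tendsto (fun k => frobNorm (X k - ((Ystar + W) * Qᵀ + X 0 * (1 - Q * Qᵀ))))
      atTop (nhds 0) :=
    squeeze_zero (fun k => Real.sqrt_nonneg _) hfin hgeo
  refine ⟨W, hAW, htend, ?_⟩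
  intro hcols
  have hwz : ∀ j, w j = 0 := by
    intro j
    have h1 : e j 0 ∈ kerAᗮ := hcols j
    have h2 := Submodule.orthogonalProjectionOnto_apply_of_mem_orthogonal h1
    rw [hw]
    simp only [h2]
    rfl
  funext i j
  rw [hW]
  show w j i = (0 : Matrix (Fin p) (Fin n) ℝ) i j
  rw [hwz j]
  rfl
end Master

/-- Theorem 3.7: convergence of the BK method with `B` of full column rank,
`B = QR`, `Ĉ = CR⁻¹`, `0 < α < 2`.  The iterates converge to a solution of `AXB = C`;
with range conditions on `X⁰` they converge to the minimum-norm solution `A⁺ĈQᵀ = A⁺CB⁺`. -/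
theorem stmt19 {m p q n : ℕ} (hm : 0 < m)
    (A : Matrix (Fin m) (Fin p) ℝ) (hrows : ∀ i : Fin m, A i ≠ 0)
    (B : Matrix (Fin q) (Fin n) ℝ) (hrank : B.rank = n)
    (Q : Matrix (Fin q) (Fin n) ℝ) (Rm : Matrix (Fin n) (Fin n) ℝ)
    (hQR : B = Q * Rm) (hQ : Qᵀ * Q = 1)
    (hRtri : Rm.BlockTriangular id) (hRdet : IsUnit Rm.det)
    (C : Matrix (Fin m) (Fin n) ℝ)
    (hcons : ∃ X₀ : Matrix (Fin p) (Fin q) ℝ, A * X₀ * B = C)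
    (Ap : Matrix (Fin p) (Fin m) ℝ) (Bp : Matrix (Fin n) (Fin q) ℝ)
    (hAp : IsMPInv A Ap) (hBp : IsMPInv B Bp)
    (α : ℝ) (hα1 : 0 < α) (hα2 : α < 2)
    (X : ℕ → Matrix (Fin p) (Fin q) ℝ)
    (hX : ∀ k : ℕ, X (k + 1) = X k + (α / vnormSq (A ⟨k % m, Nat.mod_lt k hm⟩)) •
      vecMulVec (A ⟨k % m, Nat.mod_lt k hm⟩)
        (Q *ᵥ ((C * Rm⁻¹ - A * X k * Q) ⟨k % m, Nat.mod_lt k hm⟩))) :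
    (∃ L : Matrix (Fin p) (Fin q) ℝ,
      Tendsto (fun k => frobNorm (X k - L)) atTop (nhds 0) ∧ A * L * B = C) ∧
    ((∀ j : Fin q, ∃ u : Fin m → ℝ, (fun i => X 0 i j) = Aᵀ *ᵥ u) →
     (∀ i : Fin p, ∃ w : Fin n → ℝ, X 0 i = B *ᵥ w) →
      Tendsto (fun k => frobNorm (X k - Ap * (C * Rm⁻¹) * Qᵀ)) atTop (nhds 0) ∧
      Ap * (C * Rm⁻¹) * Qᵀ = Ap * C * Bp ∧
      A * (Ap * C * Bp) * B = C ∧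
      ∀ Y : Matrix (Fin p) (Fin q) ℝ, A * Y * B = C → frobNorm (Ap * C * Bp) ≤ frobNorm Y) := by
  classical
  obtain ⟨X₀, hC⟩ := hcons
  have hRl : Rm⁻¹ * Rm = 1 := Matrix.nonsing_inv_mul Rm hRdet
  have hRr : Rm * Rm⁻¹ = 1 := Matrix.mul_nonsing_inv Rm hRdet
  have hQ' : ∀ {a : ℕ} (M : Matrix (Fin n) (Fin a) ℝ), Qᵀ * (Q * M) = M := by
    intro a M; rw [← Matrix.mul_assoc, hQ, Matrix.one_mul]
  have hRl' : ∀ {a : ℕ} (M : Matrix (Fin n) (Fin a) ℝ), Rm⁻¹ * (Rm * M) = M := by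
    intro a M; rw [← Matrix.mul_assoc, hRl, Matrix.one_mul]
  have hRr' : ∀ {a : ℕ} (M : Matrix (Fin n) (Fin a) ℝ), Rm * (Rm⁻¹ * M) = M := by
    intro a M; rw [← Matrix.mul_assoc, hRr, Matrix.one_mul]
  -- `Bp = Rm⁻¹ * Qᵀ`
  have hBp2 : IsMPInv B (Rm⁻¹ * Qᵀ) := by
    refine ⟨?_, ?_, ?_, ?_⟩
    · rw [hQR]; simp [Matrix.mul_assoc, hQ', hRl', hRr']
    · rw [hQR]; simp [Matrix.mul_assoc, hQ', hRl', hRr']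
    · rw [hQR]
      have h1 : Q * Rm * (Rm⁻¹ * Qᵀ) = Q * Qᵀ := by simp [Matrix.mul_assoc, hRr']
      rw [h1, Matrix.transpose_mul, Matrix.transpose_transpose]
    · have h1 : Rm⁻¹ * Qᵀ * B = 1 := by
        rw [hQR]; simp [Matrix.mul_assoc, hQ', hRl, hRl']
      rw [h1, Matrix.transpose_one]
  have hBpeq : Bp = Rm⁻¹ * Qᵀ := mpinv_unique B Bp (Rm⁻¹ * Qᵀ) hBp hBp2
  have hBpB : Bp * B = 1 := by
    rw [hBpeq, hQR]; simp [Matrix.mul_assoc, hQ', hRl, hRl']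
  -- consistency of `A Y = Ĉ`
  have hstar : A * (X₀ * Q) = C * Rm⁻¹ := by
    rw [← hC, hQR]
    have h1 : A * X₀ * (Q * Rm) * Rm⁻¹ = A * (X₀ * Q) := by
      simp [Matrix.mul_assoc]
      rw [show Rm * Rm⁻¹ = 1 from hRr]
      simp only [Matrix.mul_one]
    rw [h1]
  have hIQB : (1 - Q * Qᵀ) * B = 0 := by
    rw [hQR, Matrix.sub_mul, Matrix.one_mul]
    have h1 : Q * Qᵀ * (Q * Rm) = Q * Rm := by
      rw [Matrix.mul_assoc, hQ']
    rw [h1, sub_self]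
  have hQtB : Qᵀ * B = Rm := by rw [hQR, hQ']
  -- membership of columns of `Aᵀ * D` in `Ssub A`
  have colmem : ∀ (D : Matrix (Fin m) (Fin n) ℝ) (j : Fin n),
      (show EuclideanSpace ℝ (Fin p) from WithLp.toLp 2 (fun i => (Aᵀ * D) i j)) ∈ Ssub A := by
    intro D j
    rw [Ssub, Submodule.mem_orthogonal]
    intro v hv
    have hv' : A *ᵥ v = 0 := (mem_ker_iff v).1 hv
    have : (inner ℝ v (show EuclideanSpace ℝ (Fin p) from WithLp.toLp 2 (fun i => (Aᵀ * D) i j)) : ℝ)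
        = ∑ t, (A *ᵥ v) t * D t j := by
      simp only [PiLp.inner_apply, RCLike.inner_apply, conj_trivial, Matrix.mul_apply,
        Matrix.transpose_apply, Matrix.mulVec, dotProduct, Finset.sum_mul, Finset.mul_sum]
      rw [Finset.sum_comm]
      apply Finset.sum_congr rfl; intro t _
      apply Finset.sum_congr rfl; intro i _
      ring
    rw [this, hv']
    simp
  -- Part 1
  have hpart1 : ∃ L : Matrix (Fin p) (Fin q) ℝ,
      Tendsto (fun k => frobNorm (X k - L)) atTop (nhds 0) ∧ A * L * B = C := by
    obtain ⟨W, hAW, htend, -⟩ :=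
      master hm A hrows Q hQ (C * Rm⁻¹) α hα1 hα2 X hX (X₀ * Q) hstar
    refine ⟨(X₀ * Q + W) * Qᵀ + X 0 * (1 - Q * Qᵀ), htend, ?_⟩
    rw [Matrix.mul_add, Matrix.add_mul]
    have ht2 : A * (X 0 * (1 - Q * Qᵀ)) * B = 0 := by
      rw [Matrix.mul_assoc, Matrix.mul_assoc, hIQB, Matrix.mul_zero, Matrix.mul_zero]
    have ht1 : A * ((X₀ * Q + W) * Qᵀ) * B = C := by
      calc A * ((X₀ * Q + W) * Qᵀ) * B = (A * (X₀ * Q) + A * W) * (Qᵀ * B) := by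
            rw [← Matrix.mul_add]
            simp [Matrix.mul_assoc]
      _ = (C * Rm⁻¹ + 0) * Rm := by rw [hstar, hAW, hQtB]
      _ = C := by rw [add_zero, Matrix.mul_assoc, hRl, Matrix.mul_one]
    rw [ht1, ht2, add_zero]
  refine ⟨hpart1, ?_⟩
  intro hcol1 hrow2
  have hXU : ∃ U : Matrix (Fin m) (Fin q) ℝ, X 0 = Aᵀ * U := by
    refine ⟨Matrix.of (fun t j => Classical.choose (hcol1 j) t), ?_⟩
    funext i j
    have h5 : X 0 i j = (Aᵀ *ᵥ Classical.choose (hcol1 j)) i :=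
      congrFun (Classical.choose_spec (hcol1 j)) i
    rw [h5]
    simp [Matrix.mul_apply, Matrix.mulVec, dotProduct]
  obtain ⟨U, hXU⟩ := hXU
  have hXW : ∃ Wr : Matrix (Fin p) (Fin n) ℝ, X 0 = Wr * Bᵀ := by
    refine ⟨Matrix.of (fun i l => Classical.choose (hrow2 i) l), ?_⟩
    funext i j
    have h5 : X 0 i j = (B *ᵥ Classical.choose (hrow2 i)) j :=
      congrFun (Classical.choose_spec (hrow2 i)) j
    rw [h5]
    simp [Matrix.mul_apply, Matrix.mulVec, dotProduct, Matrix.transpose_apply, mul_comm]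
  obtain ⟨Wr, hXWr⟩ := hXW
  have hX0IQ : X 0 * (1 - Q * Qᵀ) = 0 := by
    have h1 : (1 - Q * Qᵀ)ᵀ = 1 - Q * Qᵀ := by
      rw [Matrix.transpose_sub, Matrix.transpose_one, Matrix.transpose_mul,
        Matrix.transpose_transpose]
    have hBt : Bᵀ * (1 - Q * Qᵀ) = 0 := by
      calc Bᵀ * (1 - Q * Qᵀ) = ((1 - Q * Qᵀ) * B)ᵀ := by rw [Matrix.transpose_mul, h1]
      _ = 0 := by rw [hIQB, Matrix.transpose_zero]
    rw [hXWr, Matrix.mul_assoc, hBt, Matrix.mul_zero]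
  set Ys : Matrix (Fin p) (Fin n) ℝ := Ap * (C * Rm⁻¹) with hYs
  have hYstar : A * Ys = C * Rm⁻¹ := by
    rw [hYs, ← hstar, ← Matrix.mul_assoc, ← Matrix.mul_assoc, hAp.1]
  have hATD : ∃ D : Matrix (Fin m) (Fin n) ℝ, X 0 * Q - Ys = Aᵀ * D := by
    refine ⟨U * Q - Apᵀ * (Ap * (C * Rm⁻¹)), ?_⟩
    have h2 : Ys = Aᵀ * (Apᵀ * (Ap * (C * Rm⁻¹))) := by
      rw [hYs]
      calc Ap * (C * Rm⁻¹) = (Ap * A) * (Ap * (C * Rm⁻¹)) := by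
            conv_rhs => rw [← Matrix.mul_assoc, hAp.2.1]
      _ = (Ap * A)ᵀ * (Ap * (C * Rm⁻¹)) := by rw [hAp.2.2.2]
      _ = Aᵀ * (Apᵀ * (Ap * (C * Rm⁻¹))) := by rw [Matrix.transpose_mul, Matrix.mul_assoc]
    rw [Matrix.mul_sub, ← h2, hXU, Matrix.mul_assoc]
  obtain ⟨D, hATD⟩ := hATD
  obtain ⟨W, hAW, htend, hWzero⟩ :=
    master hm A hrows Q hQ (C * Rm⁻¹) α hα1 hα2 X hX Ys hYstar
  have hW0 : W = 0 := by
    apply hWzero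
    intro j
    rw [hATD]
    exact colmem D j
  have hLeq : (Ys + W) * Qᵀ + X 0 * (1 - Q * Qᵀ) = Ap * (C * Rm⁻¹) * Qᵀ := by
    rw [hW0, add_zero, hX0IQ, add_zero, hYs]
  rw [hLeq] at htend
  refine ⟨htend, ?_, ?_, ?_⟩
  · rw [hBpeq, hYs]; simp [Matrix.mul_assoc]
  · have hAApC : A * Ap * C = C := by
      rw [← hC]
      calc A * Ap * (A * X₀ * B) = (A * Ap * A) * (X₀ * B) := by simp [Matrix.mul_assoc]
      _ = A * (X₀ * B) := by rw [hAp.1]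
      _ = A * X₀ * B := by rw [Matrix.mul_assoc]
    calc A * (Ap * C * Bp) * B = (A * Ap * C) * (Bp * B) := by simp [Matrix.mul_assoc]
    _ = C := by rw [hAApC, hBpB, Matrix.mul_one]
  · intro Y hY
    exact min_norm A B C Ap Bp hAp hBp Y hY
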